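/- arXiv:cs/0003032 — 2 statements merged into one kernel-verified Lean document; each statement's English description precedes it below -/
import Mathlib

section
/- Under the precondition axiom for waitFor and the successor state axiom for start, the starting time of legal action sequences is monotonically nondecreasing: for all situations s and s', if s ≺ s' (i.e., s' is obtained from s by performing a nonempty finite sequence of actions, each of which is possible in the situation in which it is performed), then start s ≤ start s'. -/
/-- The least time point of a temporal formula `φ` at situation `s`:
`t` satisfies `φ`, is at or after the start of `s`, and no earlier time at or
after the start of `s` satisfies `φ`. -/
def ltp {TForm Act : Type} (Holds : TForm → List Act → ℝ → Prop)
    (start : List Act → ℝ) (φ : TForm) (s : List Act) (t : ℝ) : Prop :=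
  Holds φ s t ∧ start s ≤ t ∧ ∀ t', start s ≤ t' → t' < t → ¬ Holds φ s t'

/-- The legal-predecessor relation `s ≺ s'`: `s'` is obtained from `s` by a
nonempty finite sequence of actions, each possible in the situation in which
it is performed.  Here situations are lists of actions with `do a s = a :: s`. -/
inductive Prec {Act : Type} (Poss : Act → List Act → Prop) :
    List Act → List Act → Prop
  | step (a : Act) (s : List Act) : Poss a s → Prec Poss s (a :: s)
  | trans (a : Act) (s s' : List Act) : Prec Poss s s' → Poss a s' →
      Prec Poss s (a :: s')

/-- Under the precondition axiom for `waitFor` and the successor state axiom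
for `start`, the starting time of legal action sequences is monotonically
nondecreasing. -/
theorem start_mono_of_prec {TForm Act : Type}
    (waitFor : TForm → Act) (hinj : Function.Injective waitFor)
    (Holds : TForm → List Act → ℝ → Prop)
    (Poss : Act → List Act → Prop)
    (start : List Act → ℝ)
    (hPossWait : ∀ (φ : TForm) (s : List Act),
      Poss (waitFor φ) s ↔ ∃ t : ℝ, ltp Holds start φ s t)
    (hStart : ∀ (a : Act) (s : List Act), Poss a s →
      ((∃ φ : TForm, a = waitFor φ ∧ ltp Holds start φ s (start (a :: s))) ∨
       ((∀ φ : TForm, a ≠ waitFor φ) ∧ start (a :: s) = start s))) :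
    ∀ s s' : List Act, Prec Poss s s' → start s ≤ start s' := by
  intro s s' h
  induction h with
  | step a s hp =>
    rcases hStart a s hp with ⟨φ, _, _, hle, _⟩ | ⟨_, heq⟩
    · exact hle
    · exact heq.ge
  | trans a s s' _ hp ih =>
    refine le_trans ih ?_
    rcases hStart a s' hp with ⟨φ, _, _, hle, _⟩ | ⟨_, heq⟩
    · exact hle
    · exact heq.ge
end

section
/- Under the precondition axiom for waitFor and the successor state axiom for start, a single legal action step never decreases the starting time: for every action a and situation s such that Poss a s holds, start s ≤ start (do a s). -/
/-- Under the precondition axiom for `waitFor` and the successor state axiom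
for `start`, a single legal action step never decreases the starting time. -/
theorem start_step_mono {TForm Act : Type}
    (waitFor : TForm → Act) (hinj : Function.Injective waitFor)
    (Holds : TForm → List Act → ℝ → Prop)
    (Poss : Act → List Act → Prop)
    (start : List Act → ℝ)
    (hPossWait : ∀ (φ : TForm) (s : List Act),
      Poss (waitFor φ) s ↔ ∃ t : ℝ, ltp Holds start φ s t)
    (hStart : ∀ (a : Act) (s : List Act), Poss a s →
      ((∃ φ : TForm, a = waitFor φ ∧ ltp Holds start φ s (start (a :: s))) ∨
       ((∀ φ : TForm, a ≠ waitFor φ) ∧ start (a :: s) = start s))) :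
    ∀ (a : Act) (s : List Act), Poss a s → start s ≤ start (a :: s) := by
  intro a s hp
  rcases hStart a s hp with ⟨φ, rfl, _, hle, _⟩ | ⟨_, heq⟩
  · exact hle
  · exact heq.ge
end
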